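/- arXiv:quant-ph/0512082 — 2 statements merged into one kernel-verified Lean document; each statement's English description precedes it below -/
import Mathlib

section
/- Even under the promise that |f(x)| ≤ M for all x, function values at finitely many points do not determine the integral: for every n, every choice of points t_1,...,t_n in [0,1] with n ≥ 1, and every M > 0, there exist continuous functions f, g : [0,1] → ℝ with |f(x)| ≤ M and |g(x)| ≤ M for all x, f(t_i) = g(t_i) for all i, and |∫₀¹ f - ∫₀¹ g| ≥ M/2. -/
/-!
Take `g = 0` and `f = M · p`, where `p = max 0 (1 - ∑ᵢ τᵢ)` and `τᵢ` is the tent of height `1` and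
half-width `1 / c` centred at `tᵢ`. Then `0 ≤ p ≤ 1` and `p (tᵢ) = 0`, while `p ≥ 1 - ∑ᵢ τᵢ` and
`∫₀¹ τᵢ ≤ 2 / c` give `∫₀¹ p ≥ 1 - 2n / c`, which is at least `1 / 2` for `c = 4 (n + 1)`.
-/

open MeasureTheory

def tent (c t x : ℝ) : ℝ := max 0 (1 - c * |x - t|)

section Tent

variable (c t : ℝ)

@[fun_prop]
lemma continuous_tent : Continuous (tent c t) := by
  unfold tent; fun_prop

lemma tent_nonneg (x : ℝ) : 0 ≤ tent c t x := le_max_left _ _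

lemma tent_self : tent c t t = 1 := by simp [tent]

variable {c}

lemma tent_le_indicator (hc : 0 < c) (x : ℝ) :
    tent c t x ≤ (Set.Icc (t - 1 / c) (t + 1 / c)).indicator 1 x := by
  rcases le_or_gt (1 - c * |x - t|) 0 with h | h
  · rw [tent, max_eq_left h]
    exact Set.indicator_nonneg (fun _ _ => zero_le_one) x
  · obtain ⟨hlo, hhi⟩ := abs_le.1 ((le_div_iff₀' hc).2 (by linarith) : |x - t| ≤ 1 / c)
    have hx : x ∈ Set.Icc (t - 1 / c) (t + 1 / c) := ⟨by linarith, by linarith⟩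
    rw [Set.indicator_of_mem hx, Pi.one_apply]
    exact max_le zero_le_one (sub_le_self _ (by positivity))

lemma integral_tent_le (hc : 0 < c) (a b : ℝ) (hab : a ≤ b) :
    ∫ x in a..b, tent c t x ≤ 2 / c := by
  set I := Set.Icc (t - 1 / c) (t + 1 / c)
  have hI : IntervalIntegrable (I.indicator 1) volume a b :=
    ((integrable_indicator_iff measurableSet_Icc).2
      (integrableOn_const measure_Icc_lt_top.ne (C := (1 : ℝ)))).intervalIntegrable
  calc ∫ x in a..b, tent c t x ≤ ∫ x in a..b, I.indicator 1 x :=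
        intervalIntegral.integral_mono_on hab ((continuous_tent c t).intervalIntegrable a b) hI
          fun x _ => tent_le_indicator t hc x
    _ = volume.real (I ∩ Set.Ioc a b) := by
        rw [intervalIntegral.integral_of_le hab, integral_indicator_one measurableSet_Icc,
          measureReal_restrict_apply measurableSet_Icc]
    _ ≤ volume.real I := measureReal_mono Set.inter_subset_left measure_Icc_lt_top.ne
    _ = 2 / c := by
        rw [Real.volume_real_Icc_of_le (by linarith [one_div_pos.2 hc])]; ring

end Tent

def notch {ι : Type*} [Fintype ι] (c : ℝ) (t : ι → ℝ) (x : ℝ) : ℝ :=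
  max 0 (1 - ∑ i, tent c (t i) x)

section Notch

variable {ι : Type*} [Fintype ι] (c : ℝ) (t : ι → ℝ)

@[fun_prop]
lemma continuous_notch : Continuous (notch c t) := by
  unfold notch; fun_prop

lemma notch_nonneg (x : ℝ) : 0 ≤ notch c t x := le_max_left _ _

lemma notch_le_one (x : ℝ) : notch c t x ≤ 1 :=
  max_le zero_le_one (sub_le_self _ (Finset.sum_nonneg fun i _ => tent_nonneg c (t i) x))

lemma notch_apply_self (i : ι) : notch c t (t i) = 0 := by
  refine max_eq_left (sub_nonpos.2 ?_)
  calc (1 : ℝ) = tent c (t i) (t i) := (tent_self c (t i)).symm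
    _ ≤ ∑ j, tent c (t j) (t i) :=
        Finset.single_le_sum (fun j _ => tent_nonneg c (t j) (t i)) (Finset.mem_univ i)

lemma sub_le_integral_notch {c : ℝ} (hc : 0 < c) (a b : ℝ) (hab : a ≤ b) :
    b - a - Fintype.card ι * (2 / c) ≤ ∫ x in a..b, notch c t x := by
  have hsum : ∑ i, ∫ x in a..b, tent c (t i) x ≤ Fintype.card ι * (2 / c) := by
    have h := Finset.sum_le_card_nsmul Finset.univ _ _ fun i _ => integral_tent_le (t i) hc a b hab
    rwa [Finset.card_univ, nsmul_eq_mul] at h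
  have hcont : Continuous fun x => 1 - ∑ i, tent c (t i) x := by fun_prop
  calc b - a - Fintype.card ι * (2 / c) ≤ b - a - ∑ i, ∫ x in a..b, tent c (t i) x := by
        linarith
    _ = ∫ x in a..b, (1 - ∑ i, tent c (t i) x) := by
        rw [intervalIntegral.integral_sub intervalIntegrable_const
          ((by fun_prop : Continuous fun x => ∑ i, tent c (t i) x).intervalIntegrable a b),
          intervalIntegral.integral_finsetSum fun i _ =>
            (continuous_tent c (t i)).intervalIntegrable a b]
        simp
    _ ≤ ∫ x in a..b, notch c t x :=
        intervalIntegral.integral_mono_on hab (hcont.intervalIntegrable a b)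
          ((continuous_notch c t).intervalIntegrable a b) fun x _ => le_max_right _ _

end Notch

theorem stmt_1_general (n : ℕ) (t : Fin n → ℝ) (M : ℝ) (hM : 0 < M) :
    ∃ f g : ℝ → ℝ,
      ContinuousOn f (Set.Icc (0:ℝ) 1) ∧ ContinuousOn g (Set.Icc (0:ℝ) 1) ∧
      (∀ x ∈ Set.Icc (0:ℝ) 1, |f x| ≤ M) ∧
      (∀ x ∈ Set.Icc (0:ℝ) 1, |g x| ≤ M) ∧
      (∀ i, f (t i) = g (t i)) ∧
      M / 2 ≤ |(∫ x in (0:ℝ)..1, f x) - ∫ x in (0:ℝ)..1, g x| := by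
  set c : ℝ := 4 * (n + 1)
  have hc : 0 < c := by positivity
  have hint : 1 / 2 ≤ ∫ x in (0:ℝ)..1, notch c t x := by
    have hlow := sub_le_integral_notch t hc 0 1 zero_le_one
    rw [Fintype.card_fin] at hlow
    have hsmall : (n : ℝ) * (2 / c) ≤ 1 / 2 := by
      rw [mul_div_assoc', div_le_div_iff₀ hc two_pos]; linarith
    linarith
  refine ⟨fun x => M * notch c t x, fun _ => 0, by fun_prop, continuousOn_const, fun x _ => ?_,
    fun x _ => by simpa using hM.le, fun i => by simp [notch_apply_self], ?_⟩
  · rw [abs_of_nonneg (mul_nonneg hM.le (notch_nonneg c t x))]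
    exact mul_le_of_le_one_right hM.le (notch_le_one c t x)
  · rw [intervalIntegral.integral_const_mul, intervalIntegral.integral_zero,
      sub_zero, abs_of_nonneg (by positivity)]
    nlinarith

theorem stmt_1 (n : ℕ) (hn : 1 ≤ n) (t : Fin n → ℝ)
    (ht : ∀ i, t i ∈ Set.Icc (0:ℝ) 1) (M : ℝ) (hM : 0 < M) :
    ∃ f g : ℝ → ℝ,
      ContinuousOn f (Set.Icc (0:ℝ) 1) ∧ ContinuousOn g (Set.Icc (0:ℝ) 1) ∧
      (∀ x ∈ Set.Icc (0:ℝ) 1, |f x| ≤ M) ∧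
      (∀ x ∈ Set.Icc (0:ℝ) 1, |g x| ≤ M) ∧
      (∀ i, f (t i) = g (t i)) ∧
      M / 2 ≤ |(∫ x in (0:ℝ)..1, f x) - ∫ x in (0:ℝ)..1, g x| :=
  stmt_1_general n t M hM
end

section
/- The minimal number of function evaluations needed to approximate the integral of every L-Lipschitz function on [0,1] to within ε in the worst case is exactly ⌈L/(4ε)⌉ (for ε < L/4, this number is finite and positive; combining the adversary lower bound L/(4n) with the midpoint rule upper bound). -/
/-!
Upper bound: on a cell of length `h` a `K`-Lipschitz function stays within `K |x - m|` of its
value at the midpoint `m`, and `∫ |x - m| = h² / 4` over the cell, so the composite midpoint rule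
with `n` cells errs by at most `K / (4 n)` on `[0, 1]`.

Lower bound: a rule that reads `f` only at `t₁, …, tₙ` cannot tell `±K · dist(·, {tᵢ})` apart,
so its error is at least `K ∫₀¹ dist(x, {tᵢ}) dx`. The set where this distance is `≤ s` is covered
by `n` intervals of length `2s`, and the layer-cake formula turns this into
`∫₀¹ dist(x, {tᵢ}) dx ≥ ∫₀^{1/(2n)} (1 - 2ns) ds = 1 / (4n)`.
-/

open MeasureTheory Set Metric
open scoped NNReal ENNReal

lemma integral_abs_sub_midpoint {a b : ℝ} (hab : a ≤ b) :
    ∫ x in a..b, |x - (a + b) / 2| = (b - a) ^ 2 / 4 := by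
  set m := (a + b) / 2 with hm
  have ham : a ≤ m := by linarith
  have hmb : m ≤ b := by linarith
  have left : ∫ x in a..m, |x - m| = ∫ x in a..m, (m - x) :=
    intervalIntegral.integral_congr fun x hx => by
      rw [uIcc_of_le ham] at hx
      rw [abs_of_nonpos (by linarith [hx.2]), neg_sub]
  have right : ∫ x in m..b, |x - m| = ∫ x in m..b, (x - m) :=
    intervalIntegral.integral_congr fun x hx => by
      rw [uIcc_of_le hmb] at hx
      exact abs_of_nonneg (by linarith [hx.1])
  have hint : Continuous fun x => |x - m| := by fun_prop
  rw [← intervalIntegral.integral_add_adjacent_intervals (b := m) (hint.intervalIntegrable _ _)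
    (hint.intervalIntegrable _ _), left, right, intervalIntegral.integral_comp_sub_left (fun x => x),
    intervalIntegral.integral_comp_sub_right (fun x => x)]
  simp only [integral_id, hm]
  ring

theorem LipschitzOnWith.abs_integral_sub_mul_midpoint_le {f : ℝ → ℝ} {K : ℝ≥0} {a b : ℝ}
    (hf : LipschitzOnWith K f (Icc a b)) (hab : a ≤ b) :
    |(∫ x in a..b, f x) - (b - a) * f ((a + b) / 2)| ≤ K * (b - a) ^ 2 / 4 := by
  have hm : (a + b) / 2 ∈ Icc a b := ⟨by linarith, by linarith⟩
  set m := (a + b) / 2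
  have hfi : IntervalIntegrable f volume a b := hf.continuousOn.intervalIntegrable_of_Icc hab
  calc |(∫ x in a..b, f x) - (b - a) * f m| = |∫ x in a..b, (f x - f m)| := by
        rw [intervalIntegral.integral_sub hfi intervalIntegrable_const,
          intervalIntegral.integral_const, smul_eq_mul]
    _ ≤ ∫ x in a..b, |f x - f m| := intervalIntegral.abs_integral_le_integral_abs hab
    _ ≤ ∫ x in a..b, K * |x - m| := by
        refine intervalIntegral.integral_mono_on hab
          ((hf.continuousOn.sub continuousOn_const).abs.intervalIntegrable_of_Icc hab)
          ((by fun_prop : Continuous fun x => K * |x - m|).intervalIntegrable _ _) fun x hx => ?_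
        simpa [Real.dist_eq] using hf.dist_le_mul x hx m hm
    _ = K * (b - a) ^ 2 / 4 := by
        rw [intervalIntegral.integral_const_mul, integral_abs_sub_midpoint hab, mul_div_assoc]

noncomputable def midpointNode (a b : ℝ) (n i : ℕ) : ℝ := a + (i + 1 / 2) * ((b - a) / n)

lemma midpointNode_mem_Icc {a b : ℝ} {n i : ℕ} (hab : a ≤ b) (hi : i < n) :
    midpointNode a b n i ∈ Icc a b := by
  have hn : (0 : ℝ) < n := by exact_mod_cast i.zero_le.trans_lt hi
  have hi' : (i : ℝ) + 1 ≤ n := by exact_mod_cast hi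
  have hba : 0 ≤ b - a := sub_nonneg.2 hab
  refine ⟨le_add_of_nonneg_right (by positivity), ?_⟩
  calc a + (i + 1 / 2) * ((b - a) / n) ≤ a + n * ((b - a) / n) := by gcongr; linarith
    _ = b := by field_simp; ring

theorem LipschitzOnWith.abs_integral_sub_sum_midpointNode_le {f : ℝ → ℝ} {K : ℝ≥0} {a b : ℝ}
    (hf : LipschitzOnWith K f (Icc a b)) (hab : a ≤ b) {n : ℕ} (hn : 0 < n) :
    |(∫ x in a..b, f x) - (b - a) / n * ∑ i : Fin n, f (midpointNode a b n i)|
      ≤ K * (b - a) ^ 2 / (4 * n) := by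
  have hn' : (0 : ℝ) < n := by exact_mod_cast hn
  set h := (b - a) / n with hh
  set p : ℕ → ℝ := fun k => a + k * h
  have hh0 : 0 ≤ h := div_nonneg (sub_nonneg.2 hab) hn'.le
  have hp_succ : ∀ k, p (k + 1) = p k + h := fun k => by simp only [p]; push_cast; ring
  have hcell : ∀ k < n, Icc (p k) (p (k + 1)) ⊆ Icc a b := fun k hk => by
    have : ((k : ℝ) + 1) * h ≤ n * h := by gcongr; exact_mod_cast hk
    refine Icc_subset_Icc (le_add_of_nonneg_right (by positivity)) ?_
    simp only [p]; push_cast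
    calc a + (k + 1) * h ≤ a + n * h := by linarith
      _ = b := by rw [hh]; field_simp; ring
  have hsplit : ∫ x in a..b, f x = ∑ k ∈ Finset.range n, ∫ x in p k..p (k + 1), f x := by
    rw [intervalIntegral.sum_integral_adjacent_intervals fun k hk =>
      (hf.mono (hcell k hk)).continuousOn.intervalIntegrable_of_Icc (by rw [hp_succ]; linarith)]
    simp only [p, CharP.cast_eq_zero, zero_mul, add_zero, hh]
    congr; field_simp; ring
  have hmid : ∀ k : ℕ, midpointNode a b n k = (p k + p (k + 1)) / 2 := fun k => by
    rw [hp_succ]; simp only [midpointNode, p, hh]; ring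
  have herr : ∀ k ∈ Finset.range n,
      |(∫ x in p k..p (k + 1), f x) - h * f (midpointNode a b n k)| ≤ K * h ^ 2 / 4 := by
    intro k hk
    have := (hf.mono (hcell k (Finset.mem_range.1 hk))).abs_integral_sub_mul_midpoint_le
      (by rw [hp_succ]; linarith)
    rwa [hp_succ, add_sub_cancel_left, ← hp_succ, ← hmid] at this
  rw [hsplit, Finset.mul_sum, Fin.sum_univ_eq_sum_range (fun i => h * f (midpointNode a b n i)),
    ← Finset.sum_sub_distrib]
  calc _ ≤ ∑ k ∈ Finset.range n, |(∫ x in p k..p (k + 1), f x) - h * f (midpointNode a b n k)| :=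
        Finset.abs_sum_le_sum_abs _ _
    _ ≤ ∑ _k ∈ Finset.range n, K * h ^ 2 / 4 := Finset.sum_le_sum herr
    _ = K * (b - a) ^ 2 / (4 * n) := by
        rw [Finset.sum_const, Finset.card_range, nsmul_eq_mul, hh]; field_simp

lemma volume_setOf_infDist_range_le {ι : Type*} [Fintype ι] [Nonempty ι] (t : ι → ℝ) (s : ℝ) :
    volume {x | infDist x (range t) ≤ s} ≤ ENNReal.ofReal (2 * Fintype.card ι * s) := by
  have hcover : {x | infDist x (range t) ≤ s} ⊆ ⋃ i, closedBall (t i) s := by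
    intro x hx
    obtain ⟨_, ⟨i, rfl⟩, hdist⟩ :=
      (finite_range t).isCompact.exists_infDist_eq_dist (range_nonempty t) x
    exact mem_iUnion.2 ⟨i, by rw [mem_closedBall, ← hdist]; exact hx⟩
  calc volume {x | infDist x (range t) ≤ s} ≤ ∑ i, volume (closedBall (t i) s) :=
        (measure_mono hcover).trans (measure_iUnion_fintype_le _ _)
    _ = ENNReal.ofReal (2 * Fintype.card ι * s) := by
        simp only [Real.volume_closedBall, Finset.sum_const, Finset.card_univ, nsmul_eq_mul]
        rw [← ENNReal.ofReal_natCast, ← ENNReal.ofReal_mul (by positivity), ← mul_assoc,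
          mul_comm (Fintype.card ι : ℝ)]

lemma inv_two_mul_le_integral_of_measure_setOf_le_le {α : Type*} [MeasurableSpace α]
    {μ : Measure α} [IsProbabilityMeasure μ] {g : α → ℝ} (hg0 : 0 ≤ g) (hgi : Integrable g μ)
    {c : ℝ} (hc : 0 < c) (hsub : ∀ s, μ {x | g x ≤ s} ≤ ENNReal.ofReal (c * s)) :
    (2 * c)⁻¹ ≤ ∫ x, g x ∂μ := by
  have htail : ∀ s ∈ Ioi (0 : ℝ), ENNReal.ofReal (1 - c * s) ≤ μ {x | s < g x} := by
    intro s hs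
    rw [ENNReal.ofReal_sub _ (mul_pos hc hs).le, ENNReal.ofReal_one, tsub_le_iff_right]
    calc (1 : ℝ≥0∞) = μ ({x | s < g x} ∪ {x | g x ≤ s}) := by
          rw [← measure_univ (μ := μ)]; congr 1; ext x; simp [lt_or_ge]
      _ ≤ μ {x | s < g x} + ENNReal.ofReal (c * s) :=
          (measure_union_le _ _).trans (add_le_add le_rfl (hsub s))
  have hramp : ∫ s in (0:ℝ)..c⁻¹, (1 - c * s) = (2 * c)⁻¹ := by
    rw [intervalIntegral.integral_sub intervalIntegrable_const
      ((by fun_prop : Continuous fun s => c * s).intervalIntegrable _ _),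
      intervalIntegral.integral_const_mul]
    simp only [intervalIntegral.integral_const, integral_id, smul_eq_mul]
    field_simp
    ring
  rw [← ENNReal.ofReal_le_ofReal_iff (integral_nonneg hg0),
    ofReal_integral_eq_lintegral_ofReal hgi (Filter.Eventually.of_forall hg0),
    lintegral_eq_lintegral_meas_lt μ (Filter.Eventually.of_forall hg0) hgi.aemeasurable,
    ← hramp, intervalIntegral.integral_of_le (inv_pos.2 hc).le]
  calc ENNReal.ofReal (∫ s in Ioc 0 c⁻¹, (1 - c * s))
      = ∫⁻ s in Ioc 0 c⁻¹, ENNReal.ofReal (1 - c * s) := by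
        refine ofReal_integral_eq_lintegral_ofReal ?_ ?_
        · exact (by fun_prop : Continuous fun s => 1 - c * s).integrableOn_Ioc
        · filter_upwards [ae_restrict_mem measurableSet_Ioc] with s hs
          have : c * s ≤ 1 := by simpa [hc.ne'] using mul_le_mul_of_nonneg_left hs.2 hc.le
          simpa using this
    _ ≤ ∫⁻ s in Ioi 0, ENNReal.ofReal (1 - c * s) := lintegral_mono_set Ioc_subset_Ioi_self
    _ ≤ ∫⁻ s in Ioi 0, μ {x | s < g x} := setLIntegral_mono' measurableSet_Ioi htail

lemma inv_four_mul_card_le_integral_infDist_range {ι : Type*} [Fintype ι] [Nonempty ι]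
    (t : ι → ℝ) : (4 * Fintype.card ι : ℝ)⁻¹ ≤ ∫ x in (0:ℝ)..1, infDist x (range t) := by
  have : IsProbabilityMeasure (volume.restrict (Ioc (0:ℝ) 1)) :=
    ⟨by rw [Measure.restrict_apply_univ, Real.volume_Ioc]; norm_num⟩
  have h := inv_two_mul_le_integral_of_measure_setOf_le_le (μ := volume.restrict (Ioc (0:ℝ) 1))
    (fun x => infDist_nonneg) ((continuous_infDist_pt _).integrableOn_Ioc) (by positivity)
    fun s => (Measure.restrict_le_self _).trans (volume_setOf_infDist_range_le t s)
  rw [intervalIntegral.integral_of_le zero_le_one]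
  convert h using 2
  ring

lemma abs_sub_le_two_mul_of_eq_on_nodes {ι : Type*} {t : ι → ℝ} {φ : (ι → ℝ) → ℝ}
    {P : (ℝ → ℝ) → Prop} {S : (ℝ → ℝ) → ℝ} {ε : ℝ}
    (hφ : ∀ f, P f → |S f - φ (fun i => f (t i))| ≤ ε) {f g : ℝ → ℝ} (hf : P f) (hg : P g)
    (hfg : ∀ i, f (t i) = g (t i)) : |S f - S g| ≤ 2 * ε := by
  have hf' := hφ f hf
  rw [funext hfg] at hf'
  have h := abs_sub_le (S f) (φ fun i => g (t i)) (S g)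
  rw [abs_sub_comm (φ _)] at h
  linarith [hφ g hg]

theorem le_four_mul_mul_of_quadrature_error_le {n : ℕ} (t : Fin n → ℝ)
    (φ : (Fin n → ℝ) → ℝ) {K : ℝ≥0} {ε : ℝ}
    (hφ : ∀ f : ℝ → ℝ, LipschitzWith K f →
      |(∫ x in (0:ℝ)..1, f x) - φ (fun i => f (t i))| ≤ ε) :
    (K : ℝ) ≤ 4 * n * ε := by
  rcases n.eq_zero_or_pos with rfl | hn
  · have h := abs_sub_le_two_mul_of_eq_on_nodes hφ (f := fun _ => 2 * ε + 1) (g := fun _ => 0)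
      ((LipschitzWith.const _).weaken zero_le) ((LipschitzWith.const _).weaken zero_le)
      finZeroElim
    simp only [intervalIntegral.integral_const, sub_zero, smul_eq_mul, one_mul] at h
    linarith [le_abs_self (2 * ε + 1)]
  have := Fin.pos_iff_nonempty.1 hn
  have hd := lipschitz_infDist_pt (range t)
  have h := abs_sub_le_two_mul_of_eq_on_nodes hφ (f := fun x => K * infDist x (range t))
    (g := fun x => -K * infDist x (range t))
    (by simpa [Function.comp_def] using (lipschitzWith_smul (K:ℝ)).comp hd)
    (by simpa [Function.comp_def] using (lipschitzWith_smul (-K:ℝ)).comp hd)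
    (fun i => by simp [infDist_zero_of_mem (mem_range_self i)])
  have hlow := inv_four_mul_card_le_integral_infDist_range t
  simp only [neg_mul, intervalIntegral.integral_neg, intervalIntegral.integral_const_mul,
    sub_neg_eq_add, Fintype.card_fin] at h hlow
  set I := ∫ x in (0:ℝ)..1, infDist x (range t)
  have hKI : (K : ℝ) * I ≤ ε := by linarith [le_abs_self (K * I + K * I)]
  have := (mul_le_mul_of_nonneg_left hlow K.2).trans hKI
  rwa [← div_eq_mul_inv, div_le_iff₀ (by positivity), mul_comm] at this

theorem stmt_4_general (L : ℝ) (hL : 0 < L) (ε : ℝ) (hε : 0 < ε) :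
    IsLeast {n : ℕ |
      ∃ t : Fin n → ℝ, (∀ i, t i ∈ Set.Icc (0:ℝ) 1) ∧
      ∃ φ : (Fin n → ℝ) → ℝ,
        ∀ f : ℝ → ℝ,
          (∀ x ∈ Set.Icc (0:ℝ) 1, ∀ y ∈ Set.Icc (0:ℝ) 1, |f x - f y| ≤ L * |x - y|) →
          |(∫ x in (0:ℝ)..1, f x) - φ (fun i => f (t i))| ≤ ε}
      ⌈L / (4 * ε)⌉₊ := by
  have hceil := (div_le_iff₀ (by positivity)).1 (Nat.le_ceil (L / (4 * ε)))
  refine ⟨⟨fun i => midpointNode 0 1 _ i, fun i => midpointNode_mem_Icc zero_le_one i.2,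
    fun v => (1 - 0) / ⌈L / (4 * ε)⌉₊ * ∑ i, v i, fun f hf => ?_⟩, fun n ⟨t, _, φ, hφ⟩ => ?_⟩
  · have hn : 0 < ⌈L / (4 * ε)⌉₊ := Nat.ceil_pos.2 (by positivity)
    refine ((LipschitzOnWith.of_dist_le' (by simpa [Real.dist_eq] using hf)
      ).abs_integral_sub_sum_midpointNode_le zero_le_one hn).trans ?_
    rw [Real.coe_toNNReal _ hL.le, sub_zero, one_pow, mul_one, div_le_iff₀ (by positivity)]
    linarith
  · have := le_four_mul_mul_of_quadrature_error_le t φ (K := L.toNNReal) fun f hf =>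
      hφ f fun x _ y _ => by simpa [Real.dist_eq, hL.le] using hf.dist_le_mul x y
    rw [Real.coe_toNNReal _ hL.le] at this
    rw [Nat.ceil_le, div_le_iff₀ (by positivity)]
    linarith

theorem stmt_4 (L : ℝ) (hL : 0 < L) (ε : ℝ) (hε : 0 < ε) (hεL : ε < L / 4) :
    IsLeast {n : ℕ |
      ∃ t : Fin n → ℝ, (∀ i, t i ∈ Set.Icc (0:ℝ) 1) ∧
      ∃ φ : (Fin n → ℝ) → ℝ,
        ∀ f : ℝ → ℝ,
          (∀ x ∈ Set.Icc (0:ℝ) 1, ∀ y ∈ Set.Icc (0:ℝ) 1, |f x - f y| ≤ L * |x - y|) →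
          |(∫ x in (0:ℝ)..1, f x) - φ (fun i => f (t i))| ≤ ε}
      ⌈L / (4 * ε)⌉₊ :=
  stmt_4_general L hL ε hε
end
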